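/- Let A be a simple finite-dimensional algebra over a field F of characteristic zero with a comultiplication Δ such that the Drinfeld double D(A) is a direct sum A₁ ⊕ A₂ of two proper simple ideals, let φ₁, φ₂ : A* → A be the linear maps with f − φᵢ(f) ∈ Aᵢ for all f ∈ A*, and let ψ : A → A* be the linear bijection with a = −φ₁(ψ(a)) + φ₂(ψ(a)) for all a ∈ A. Then for all a, b ∈ A: (i) ψ(ab) = ψ(a)ψ(b) − φ₁(ψ(a))⇁ψ(b) − ψ(a)⇽φ₁(ψ(b)), and (ii) ψ(ab) = −(ψ(a)ψ(b) − φ₂(ψ(a))⇁ψ(b) − ψ(a)⇽φ₂(ψ(b))). -/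

import Mathlib

open TensorProduct

/-- `I` is a (two-sided) ideal for the product `prod`. -/
def IsIdealP {F M : Type*} [Field F] [AddCommGroup M] [Module F M]
    (prod : M → M → M) (I : Submodule F M) : Prop :=
  ∀ x ∈ I, ∀ y : M, prod x y ∈ I ∧ prod y x ∈ I

/-- The ideal `I` is simple as an algebra with the restricted product. -/
def IsSimpleIdealP {F M : Type*} [Field F] [AddCommGroup M] [Module F M]
    (prod : M → M → M) (I : Submodule F M) : Prop :=
  (∃ x ∈ I, ∃ y ∈ I, prod x y ≠ 0) ∧
    ∀ J : Submodule F M, J ≤ I →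
      (∀ x ∈ J, ∀ y ∈ I, prod x y ∈ J ∧ prod y x ∈ J) → J = ⊥ ∨ J = I

/-- The multiplication of the Drinfeld double `D(A) = A ⊕ A*` associated with the
bilinear product `mul` and the comultiplication `Δ`:
`(a + f)(b + g) = (ab + f⇀b + a↼g) + (fg + f⇽b + a⇁g)`. -/
noncomputable def dmul {F A : Type*} [Field F] [AddCommGroup A] [Module F A]
    (mul : A →ₗ[F] A →ₗ[F] A) (Δ : A →ₗ[F] A ⊗[F] A)
    (p q : A × Module.Dual F A) : A × Module.Dual F A :=
  (mul p.1 q.1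
      + TensorProduct.rid F A (LinearMap.lTensor A p.2 (Δ q.1))
      + TensorProduct.lid F A (LinearMap.rTensor A q.2 (Δ p.1)),
    Δ.dualMap (TensorProduct.dualDistrib F A A (p.2 ⊗ₜ[F] q.2))
      + p.2.comp (mul q.1)
      + q.2.comp (mul.flip p.1))

/-!
Since `A₁ A₂ = A₂ A₁ = 0`, the projections of `D(A) = A₁ ⊕ A₂` onto its two ideals are
multiplicative. An element `a ∈ A ⊆ D(A)` decomposes as
`(ψ a - φ₁ (ψ a)) + (φ₂ (ψ a) - ψ a)`, so comparing the components of `ab` with the products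
of the components of `a` and `b`, and reading off the `A*`-coordinate, gives (i) and (ii).
-/

section DisjointIdeals

variable {F M : Type*} [Field F] [AddCommGroup M] [Module F M] {μ : M →ₗ[F] M →ₗ[F] M}
  {I J : Submodule F M}

theorem IsIdealP.apply_eq_zero_of_disjoint (hI : IsIdealP (fun x y ↦ μ x y) I)
    (hJ : IsIdealP (fun x y ↦ μ x y) J) (hIJ : Disjoint I J) {x y : M} (hx : x ∈ I)
    (hy : y ∈ J) : μ x y = 0 :=
  Submodule.disjoint_def.mp hIJ _ (hI x hx y).1 (hJ y hy x).2

theorem Submodule.eq_and_eq_of_add_eq_add_of_disjoint (hIJ : Disjoint I J) {u u' v v' : M}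
    (hu : u ∈ I) (hu' : u' ∈ I) (hv : v ∈ J) (hv' : v' ∈ J) (h : u + v = u' + v') :
    u = u' ∧ v = v' := by
  have hsub : u - u' = v' - v := by rw [sub_eq_sub_iff_add_eq_add, h, add_comm]
  obtain rfl : u = u' :=
    sub_eq_zero.mp (Submodule.disjoint_def.mp hIJ _ (sub_mem hu hu') (hsub ▸ sub_mem hv' hv))
  exact ⟨rfl, add_left_cancel h⟩

theorem IsIdealP.eq_and_eq_of_add_eq_apply_add_add (hI : IsIdealP (fun x y ↦ μ x y) I)
    (hJ : IsIdealP (fun x y ↦ μ x y) J) (hIJ : Disjoint I J) {u u' w v v' z : M}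
    (hu : u ∈ I) (hu' : u' ∈ I) (hw : w ∈ I) (hv : v ∈ J) (hv' : v' ∈ J) (hz : z ∈ J)
    (h : w + z = μ (u + v) (u' + v')) : w = μ u u' ∧ z = μ v v' := by
  have hexpand : μ (u + v) (u' + v') = μ u u' + μ v v' := by
    rw [LinearMap.map_add₂, map_add, map_add,
      hI.apply_eq_zero_of_disjoint hJ hIJ hu hv', hJ.apply_eq_zero_of_disjoint hI hIJ.symm hv hu']
    abel
  exact Submodule.eq_and_eq_of_add_eq_add_of_disjoint hIJ hw (hI u hu u').1 hz (hJ v hv v').1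
    (h.trans hexpand)

end DisjointIdeals

section DrinfeldDouble

variable {F A : Type*} [Field F] [AddCommGroup A] [Module F A] (mul : A →ₗ[F] A →ₗ[F] A)
  (Δ : A →ₗ[F] A ⊗[F] A)

noncomputable def dmulₗ :
    (A × Module.Dual F A) →ₗ[F] (A × Module.Dual F A) →ₗ[F] (A × Module.Dual F A) :=
  LinearMap.mk₂ F (dmul mul Δ)
    (fun p p' q ↦ by
      simp only [dmul, Prod.fst_add, Prod.snd_add, map_add, LinearMap.add_apply,
        LinearMap.lTensor_add, add_tmul, LinearMap.add_comp, LinearMap.comp_add, Prod.mk_add_mk]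
      congr 1 <;> abel)
    (fun c p q ↦ by
      simp only [dmul, Prod.smul_fst, Prod.smul_snd, map_smul, LinearMap.smul_apply,
        LinearMap.lTensor_smul, ← smul_tmul', LinearMap.smul_comp, LinearMap.comp_smul,
        Prod.smul_mk, smul_add])
    (fun p q q' ↦ by
      simp only [dmul, Prod.fst_add, Prod.snd_add, map_add, LinearMap.add_apply,
        LinearMap.rTensor_add, tmul_add, LinearMap.add_comp, LinearMap.comp_add, Prod.mk_add_mk]
      congr 1 <;> abel)
    (fun c p q ↦ by
      simp only [dmul, Prod.smul_fst, Prod.smul_snd, map_smul, LinearMap.smul_apply,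
        LinearMap.rTensor_smul, tmul_smul, LinearMap.smul_comp, LinearMap.comp_smul,
        Prod.smul_mk, smul_add])

@[simp]
theorem dmulₗ_apply (p q : A × Module.Dual F A) : dmulₗ mul Δ p q = dmul mul Δ p q := rfl

theorem dmul_inl_inl (a b : A) : dmul mul Δ (a, 0) (b, 0) = (mul a b, 0) := by
  simp [dmul]

theorem snd_dmul_neg (a b : A) (f g : Module.Dual F A) :
    (dmul mul Δ (-a, f) (-b, g)).2 = Δ.dualMap (dualDistrib F A A (f ⊗ₜ[F] g))
      - g.comp (mul.flip a) - f.comp (mul b) := by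
  simp only [dmul, map_neg, LinearMap.comp_neg]
  abel

end DrinfeldDouble

theorem stmt6 {F A : Type*} [Field F] [AddCommGroup A] [Module F A]
    (mul : A →ₗ[F] A →ₗ[F] A)
    -- a comultiplication on `A`
    (Δ : A →ₗ[F] A ⊗[F] A)
    -- `D(A) = A₁ ⊕ A₂`, a direct sum of two proper simple ideals
    (A₁ A₂ : Submodule F (A × Module.Dual F A))
    (hcompl : IsCompl A₁ A₂)
    (hid1 : IsIdealP (dmul mul Δ) A₁) (hid2 : IsIdealP (dmul mul Δ) A₂)
    -- the linear maps `φᵢ` with `f - φᵢ(f) ∈ Aᵢ` for all `f ∈ A*`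
    (φ₁ φ₂ : Module.Dual F A →ₗ[F] A)
    (hφ1 : ∀ f : Module.Dual F A, ((-φ₁ f, f) : A × Module.Dual F A) ∈ A₁)
    (hφ2 : ∀ f : Module.Dual F A, ((-φ₂ f, f) : A × Module.Dual F A) ∈ A₂)
    -- the linear bijection `ψ` with `a = -φ₁(ψ a) + φ₂(ψ a)` for all `a ∈ A`
    (ψ : A →ₗ[F] Module.Dual F A)
    (hψ : ∀ c : A, c = -φ₁ (ψ c) + φ₂ (ψ c))
    :
    ∀ c d : A,
      ψ (mul c d) = Δ.dualMap (TensorProduct.dualDistrib F A A (ψ c ⊗ₜ[F] ψ d))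
          - (ψ d).comp (mul.flip (φ₁ (ψ c))) - (ψ c).comp (mul (φ₁ (ψ d))) ∧
      ψ (mul c d) = -(Δ.dualMap (TensorProduct.dualDistrib F A A (ψ c ⊗ₜ[F] ψ d))
          - (ψ d).comp (mul.flip (φ₂ (ψ c))) - (ψ c).comp (mul (φ₂ (ψ d)))) := by
  intro c d
  have hdecomp (a : A) :
      ((a, 0) : A × Module.Dual F A) = (-φ₁ (ψ a), ψ a) + -(-φ₂ (ψ a), ψ a) := by
    rw [Prod.neg_mk, neg_neg, Prod.mk_add_mk, add_neg_cancel, ← hψ a]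
  have hmul : (-φ₁ (ψ (mul c d)), ψ (mul c d)) + -(-φ₂ (ψ (mul c d)), ψ (mul c d))
      = dmulₗ mul Δ ((-φ₁ (ψ c), ψ c) + -(-φ₂ (ψ c), ψ c))
          ((-φ₁ (ψ d), ψ d) + -(-φ₂ (ψ d), ψ d)) := by
    rw [← hdecomp, ← hdecomp, ← hdecomp, dmulₗ_apply, dmul_inl_inl]
  obtain ⟨h₁, h₂⟩ := hid1.eq_and_eq_of_add_eq_apply_add_add hid2 hcompl.disjoint (hφ1 _) (hφ1 _)
    (hφ1 _) (neg_mem (hφ2 _)) (neg_mem (hφ2 _)) (neg_mem (hφ2 _)) hmul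
  simp only [map_neg, LinearMap.neg_apply, neg_neg, dmulₗ_apply] at h₁ h₂
  rw [← snd_dmul_neg, ← snd_dmul_neg, ← h₁, ← h₂]
  exact ⟨rfl, (neg_neg _).symm⟩
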